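/- arXiv:2003.09449 — 4 statements merged into one kernel-verified Lean document; each statement's English description precedes it below -/
import Mathlib

section
/- Let X be an infinite-dimensional complex Banach space and P : X → ℂ a nonzero continuous 2-homogeneous polynomial. If M ⊆ X is a linear subspace with P identically zero on M, then there exists an infinite-dimensional P-maximal subspace H of X with M ⊆ H. -/
/-!
Zorn's lemma gives a maximal subspace `H ⊇ M` on which `P` vanishes, and `H ≠ X` because
`P ≠ 0`. Write `P x = B x x` with `B` symmetric bilinear. If `H` were finite dimensional, its
`B`-orthogonal `{x | ∀ h ∈ H, B x h = 0}` would have finite codimension, hence be infinite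
dimensional and contain `u, v` linearly independent modulo `H`. Over `ℂ` the binary quadratic form
`(s, t) ↦ B (s • u + t • v) (s • u + t • v)` has a nontrivial zero `x ∉ H`, and `P` still
vanishes on `H ⊔ ℂ ∙ x`, contradicting maximality.
-/

/-- `P : X → ℂ` is a 2-homogeneous polynomial: there is a symmetric bilinear
(2-linear) form `A` with `P x = A (x, x)`. -/
def IsHomogPoly {X : Type*} [NormedAddCommGroup X] [NormedSpace ℂ X]
    (n : ℕ) (P : X → ℂ) : Prop :=
  ∃ A : MultilinearMap ℂ (fun _ : Fin n => X) ℂ,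
    (∀ (σ : Equiv.Perm (Fin n)) (v : Fin n → X), (A fun i => v (σ i)) = A v) ∧
    ∀ x, P x = A fun _ => x

/-- `P` is a continuous `n`-homogeneous polynomial: homogeneous and bounded on
the unit ball, i.e. `‖P x‖ ≤ C‖x‖ⁿ` for some constant `C`. -/
def IsContHomogPoly {X : Type*} [NormedAddCommGroup X] [NormedSpace ℂ X]
    (n : ℕ) (P : X → ℂ) : Prop :=
  IsHomogPoly n P ∧ ∃ C : ℝ, ∀ x, ‖P x‖ ≤ C * ‖x‖ ^ n

/-- `M` is a `P`-maximal subspace: a proper subspace on which `P` vanishes identically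
and which is maximal among subspaces on which `P` vanishes. -/
def IsPMaximal {X : Type*} [NormedAddCommGroup X] [NormedSpace ℂ X]
    (P : X → ℂ) (M : Submodule ℂ X) : Prop :=
  M ≠ ⊤ ∧ (∀ x ∈ M, P x = 0) ∧
    ∀ M₁ : Submodule ℂ X, M ≤ M₁ → (∀ x ∈ M₁, P x = 0) → M₁ = M

theorem IsHomogPoly.exists_bilinForm_isSymm {X : Type*} [NormedAddCommGroup X] [NormedSpace ℂ X]
    {P : X → ℂ} (hP : IsHomogPoly 2 P) :
    ∃ B : LinearMap.BilinForm ℂ X, B.IsSymm ∧ ∀ x, P x = B x x := by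
  obtain ⟨A, hA, hPA⟩ := hP
  have update_one (x y z : X) : Function.update ![x, y] 1 z = ![x, z] := by
    ext i; fin_cases i <;> rfl
  refine ⟨LinearMap.mk₂ ℂ (fun x y => A ![x, y]) (fun x x' y => A.cons_add _ _ _)
      (fun c x y => A.cons_smul _ _ _)
      (fun x y y' => by simpa only [update_one] using A.map_update_add ![x, y] 1 y y')
      (fun c x y => by simpa only [update_one] using A.map_update_smul ![x, y] 1 c y),
    ⟨fun x y => ?_⟩, fun x => ?_⟩
  · have hswap : (fun i => ![y, x] (Equiv.swap 0 1 i)) = ![x, y] := by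
      ext i; fin_cases i <;> rfl
    show A ![x, y] = A ![y, x]
    simpa only [hswap] using hA (Equiv.swap 0 1) ![y, x]
  · have hdiag : (fun _ : Fin 2 => x) = ![x, x] := by
      ext i; fin_cases i <;> rfl
    rw [hPA, hdiag]
    rfl

theorem Submodule.exists_le_maximal_forall {R M : Type*} [Semiring R] [AddCommMonoid M]
    [Module R M] (p : M → Prop) {N : Submodule R M} (hN : ∀ x ∈ N, p x) :
    ∃ H, N ≤ H ∧ Maximal (fun H : Submodule R M => ∀ x ∈ H, p x) H := by
  refine zorn_le_nonempty₀ {H | ∀ x ∈ H, p x} (fun c hc hchain H hH => ⟨sSup c, ?_, ?_⟩) N hN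
  · intro x hx
    obtain ⟨H', hH', hxH'⟩ := (Submodule.mem_sSup_of_directed ⟨H, hH⟩ hchain.directedOn).mp hx
    exact hc hH' x hxH'
  · exact fun _ => le_sSup

theorem exists_ne_zero_quadratic_eq_zero {K : Type*} [Field K] [IsAlgClosed K] [NeZero (2 : K)]
    (a b c : K) : ∃ s t : K, (s, t) ≠ 0 ∧ a * s ^ 2 + b * (s * t) + c * t ^ 2 = 0 := by
  rcases eq_or_ne a 0 with rfl | ha
  · exact ⟨1, 0, by simp, by simp⟩
  obtain ⟨r, hr⟩ := IsAlgClosed.exists_eq_mul_self (discrim a b c)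
  obtain ⟨s, hs⟩ := exists_quadratic_eq_zero ha ⟨r, hr⟩
  exact ⟨s, 1, by simp, by linear_combination hs⟩

section

variable {K V : Type*} [DivisionRing K] [AddCommGroup V] [Module K V]

theorem Submodule.exists_mem_notMem_of_not_finiteDimensional {W : Submodule K V}
    (hW : ¬ FiniteDimensional K W) (N : Submodule K V) [FiniteDimensional K N] :
    ∃ x ∈ W, x ∉ N := by
  by_contra! hWN
  exact hW (Submodule.finiteDimensional_of_le hWN)

theorem LinearMap.not_finiteDimensional_ker {W : Type*} [AddCommGroup W] [Module K W]
    [FiniteDimensional K W] (hV : ¬ FiniteDimensional K V) (f : V →ₗ[K] W) :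
    ¬ FiniteDimensional K (LinearMap.ker f) := by
  intro hker
  have : FiniteDimensional K (V ⧸ LinearMap.ker f) := f.quotKerEquivRange.symm.finiteDimensional
  exact hV (Module.Finite.of_submodule_quotient (LinearMap.ker f))

end

namespace LinearMap.BilinForm

variable {K V : Type*} [Field K] [AddCommGroup V] [Module K V] (B : LinearMap.BilinForm K V)

theorem exists_smul_add_smul_apply_self_eq_zero [IsAlgClosed K] [NeZero (2 : K)] (u v : V) :
    ∃ s t : K, (s, t) ≠ 0 ∧ B (s • u + t • v) (s • u + t • v) = 0 := by
  obtain ⟨s, t, hst, h⟩ := exists_ne_zero_quadratic_eq_zero (B u u) (B u v + B v u) (B v v)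
  refine ⟨s, t, hst, ?_⟩
  simp only [map_add, map_smul, LinearMap.add_apply, LinearMap.smul_apply, smul_eq_mul]
  linear_combination h

theorem exists_mem_notMem_apply_self_eq_zero [IsAlgClosed K] [NeZero (2 : K)]
    {W : Submodule K V} (hW : ¬ FiniteDimensional K W) (N : Submodule K V)
    [FiniteDimensional K N] : ∃ x ∈ W, x ∉ N ∧ B x x = 0 := by
  obtain ⟨u, huW, huN⟩ := W.exists_mem_notMem_of_not_finiteDimensional hW N
  obtain ⟨v, hvW, hvN⟩ := W.exists_mem_notMem_of_not_finiteDimensional hW (N ⊔ K ∙ u)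
  obtain ⟨s, t, hst, hB⟩ := B.exists_smul_add_smul_apply_self_eq_zero u v
  refine ⟨s • u + t • v, W.add_mem (W.smul_mem s huW) (W.smul_mem t hvW), fun hN => hst ?_, hB⟩
  obtain rfl : t = 0 := by
    by_contra ht
    have hv : v = t⁻¹ • (s • u + t • v) - (t⁻¹ * s) • u := by
      rw [smul_add, smul_smul, smul_smul, inv_mul_cancel₀ ht, one_smul, add_sub_cancel_left]
    exact hvN (hv ▸ sub_mem (Submodule.mem_sup_left (N.smul_mem _ hN))
      (Submodule.mem_sup_right (Submodule.smul_mem _ _ (Submodule.mem_span_singleton_self u))))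
  obtain rfl : s = 0 := by
    by_contra hs
    rw [zero_smul, add_zero, N.smul_mem_iff hs] at hN
    exact huN hN
  rfl

theorem apply_self_eq_zero_of_mem_sup_span_singleton (hB : B.IsSymm) {H : Submodule K V}
    (hH : ∀ h ∈ H, B h h = 0) {x : V} (hxH : ∀ h ∈ H, B x h = 0) (hx : B x x = 0) :
    ∀ y ∈ H ⊔ K ∙ x, B y y = 0 := by
  intro y hy
  obtain ⟨h, hh, z, hz, rfl⟩ := Submodule.mem_sup.mp hy
  obtain ⟨c, rfl⟩ := Submodule.mem_span_singleton.mp hz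
  simp [hH h hh, hxH h hh, hB.eq h x, hx]

theorem not_finiteDimensional_of_maximal [IsAlgClosed K] [NeZero (2 : K)]
    (hV : ¬ FiniteDimensional K V) (hB : B.IsSymm) {H : Submodule K V}
    (hH : Maximal (fun H : Submodule K V => ∀ x ∈ H, B x x = 0) H) :
    ¬ FiniteDimensional K H := by
  intro hfin
  obtain ⟨x, hxker, hxH, hx⟩ := B.exists_mem_notMem_apply_self_eq_zero
    (LinearMap.not_finiteDimensional_ker hV (B.compl₂ H.subtype)) H
  have hxH' : ∀ h ∈ H, B x h = 0 := fun h hh => LinearMap.congr_fun hxker ⟨h, hh⟩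
  have hsup := hH.eq_of_le (B.apply_self_eq_zero_of_mem_sup_span_singleton hB hH.prop hxH' hx)
    le_sup_left
  exact hxH (hsup ▸ Submodule.mem_sup_right (Submodule.mem_span_singleton_self x))

end LinearMap.BilinForm

theorem exists_infiniteDim_pMaximal_general {X : Type*} [NormedAddCommGroup X] [NormedSpace ℂ X]
    (hX : ¬ FiniteDimensional ℂ X)
    (P : X → ℂ) (hP : IsContHomogPoly 2 P) (hP0 : P ≠ 0)
    (M : Submodule ℂ X) (hM : ∀ x ∈ M, P x = 0) :
    ∃ H : Submodule ℂ X, IsPMaximal P H ∧ ¬ FiniteDimensional ℂ H ∧ M ≤ H := by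
  obtain ⟨B, hB, hPB⟩ := hP.1.exists_bilinForm_isSymm
  obtain rfl : P = fun x => B x x := funext hPB
  obtain ⟨H, hMH, hH⟩ := Submodule.exists_le_maximal_forall _ hM
  refine ⟨H, ⟨?_, hH.prop, fun M₁ hle h0 => hH.eq_of_ge h0 hle⟩,
    B.not_finiteDimensional_of_maximal hX hB hH, hMH⟩
  rintro rfl
  exact hP0 (funext fun x => hH.prop x Submodule.mem_top)

/-- Let `X` be an infinite-dimensional complex Banach space and `P` a nonzero continuous
2-homogeneous polynomial on `X`. If `P` vanishes identically on a subspace `M`, then there is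
an infinite-dimensional `P`-maximal subspace `H` containing `M`. -/
theorem exists_infiniteDim_pMaximal {X : Type*} [NormedAddCommGroup X] [NormedSpace ℂ X]
    [CompleteSpace X] (hX : ¬ FiniteDimensional ℂ X)
    (P : X → ℂ) (hP : IsContHomogPoly 2 P) (hP0 : P ≠ 0)
    (M : Submodule ℂ X) (hM : ∀ x ∈ M, P x = 0) :
    ∃ H : Submodule ℂ X, IsPMaximal P H ∧ ¬ FiniteDimensional ℂ H ∧ M ≤ H :=
  exists_infiniteDim_pMaximal_general hX P hP hP0 M hM
end

section
/- Let X be a non-separable Banach space. Then X has the NIP if and only if for every countable family (φ_i)_{i ∈ ℕ} of continuous linear functionals on X, the subspace ⋂_{i ∈ ℕ} ker φ_i is non-separable. -/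
/-!
If `⋂ ker φᵢ` were separable, pick a countable set `c` dense in it and, by Hahn–Banach, a
functional `ψ_y` of norm at most one with `ψ_y y = ‖y‖` for each `y ∈ c`. The NIP applied to the
countable family `(φᵢ) ∪ (ψ_y)` gives `x ≠ 0` in `⋂ ker φᵢ` killed by every `ψ_y`; then
`‖y‖ = ‖ψ_y (y - x)‖ ≤ ‖x - y‖`, so `‖x‖ ≤ 2 ‖x - y‖` for all `y ∈ c`, which is impossible since
`x ≠ 0` lies in the closure of `c`.
-/

/-- A Banach space `X` has the nontrivial intersection property (NIP) if for every countable
family of continuous linear functionals on `X` the intersection of their kernels is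
nontrivial. -/
def HasNIP (𝕜 X : Type*) [RCLike 𝕜] [NormedAddCommGroup X] [NormedSpace 𝕜 X] : Prop :=
  ∀ φ : ℕ → (X →L[𝕜] 𝕜), (⨅ i, LinearMap.ker (φ i : X →ₗ[𝕜] 𝕜)) ≠ ⊥

open Set TopologicalSpace

section

variable {𝕜 X : Type*} [RCLike 𝕜] [NormedAddCommGroup X] [NormedSpace 𝕜 X]

theorem norm_le_two_mul_dist_of_apply_eq_zero {f : X →L[𝕜] 𝕜} {x y : X} (hf : ‖f‖ ≤ 1)
    (hfy : f y = ‖y‖) (hfx : f x = 0) : ‖x‖ ≤ 2 * dist x y := by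
  have hy : ‖y‖ ≤ dist x y :=
    calc ‖y‖ = ‖f (y - x)‖ := by simp [hfx, hfy]
      _ ≤ ‖y - x‖ := by simpa using f.le_of_opNorm_le hf (y - x)
      _ = dist x y := (dist_eq_norm' x y).symm
  calc ‖x‖ ≤ ‖y‖ + dist x y := by rw [dist_eq_norm]; exact norm_le_insert' x y
    _ ≤ 2 * dist x y := by linarith

theorem eq_zero_of_mem_closure_of_forall_apply_eq_zero {ι : Type*} {y : ι → X}
    {f : ι → X →L[𝕜] 𝕜} (hf : ∀ i, ‖f i‖ ≤ 1) (hfy : ∀ i, f i (y i) = ‖y i‖) {x : X}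
    (hx : x ∈ closure (range y)) (hfx : ∀ i, f i x = 0) : x = 0 := by
  have hsub : closure (range y) ⊆ {z | ‖x‖ ≤ 2 * dist x z} :=
    closure_minimal
      (range_subset_iff.2 fun i => norm_le_two_mul_dist_of_apply_eq_zero (hf i) (hfy i) (hfx i))
      (isClosed_le continuous_const (by fun_prop))
  simpa using hsub hx

theorem TopologicalSpace.IsSeparable.exists_countable_separating_dual {s : Set X}
    (hs : IsSeparable s) :
    ∃ c : Set X, c.Countable ∧ ∃ f : c → X →L[𝕜] 𝕜, ∀ x ∈ s, (∀ i, f i x = 0) → x = 0 := by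
  obtain ⟨c, hc, hsc⟩ := hs
  choose f hf using fun y : c => exists_dual_vector'' 𝕜 (y : X)
  refine ⟨c, hc, f, fun x hx hfx => ?_⟩
  refine eq_zero_of_mem_closure_of_forall_apply_eq_zero (fun i => (hf i).1) (fun i => (hf i).2)
    ?_ hfx
  rw [Subtype.range_coe]
  exact hsc hx

theorem HasNIP.exists_ne_zero_forall_apply_eq_zero (h : HasNIP 𝕜 X) {ι : Type*} [Countable ι]
    (φ : ι → X →L[𝕜] 𝕜) : ∃ x ≠ 0, ∀ i, φ i x = 0 := by
  rcases isEmpty_or_nonempty ι with _ | _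
  · obtain ⟨x, -, hx⟩ := Submodule.exists_mem_ne_zero_of_ne_bot (h 0)
    exact ⟨x, hx, isEmptyElim⟩
  · obtain ⟨e, he⟩ := exists_surjective_nat ι
    obtain ⟨x, hx, hx0⟩ := Submodule.exists_mem_ne_zero_of_ne_bot (h (φ ∘ e))
    exact ⟨x, hx0, he.forall.2 ((Submodule.mem_iInf _).1 hx)⟩

end

theorem hasNIP_iff_nonseparable_inter_general {𝕜 X : Type*} [RCLike 𝕜] [NormedAddCommGroup X]
    [NormedSpace 𝕜 X] :
    HasNIP 𝕜 X ↔
      ∀ φ : ℕ → (X →L[𝕜] 𝕜),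
        ¬ TopologicalSpace.IsSeparable ((⨅ i, LinearMap.ker (φ i : X →ₗ[𝕜] 𝕜) : Submodule 𝕜 X) : Set X) := by
  refine ⟨fun h φ hsep => ?_, fun h φ hbot => h φ ?_⟩
  · obtain ⟨c, hc, ψ, hψ⟩ := hsep.exists_countable_separating_dual (𝕜 := 𝕜)
    have : Countable c := hc.to_subtype
    obtain ⟨x, hx0, hx⟩ := h.exists_ne_zero_forall_apply_eq_zero (Sum.elim φ ψ)
    rw [Sum.forall] at hx
    exact hx0 (hψ x ((Submodule.mem_iInf _).2 hx.1) hx.2)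
  · rw [hbot]
    simpa using (countable_singleton (0 : X)).isSeparable

/-- A non-separable Banach space `X` has the NIP if and only if for every countable family
`(φ_i)` of continuous linear functionals the subspace `⋂ i, ker φ_i` is non-separable. -/
theorem hasNIP_iff_nonseparable_inter {𝕜 X : Type*} [RCLike 𝕜] [NormedAddCommGroup X]
    [NormedSpace 𝕜 X] [CompleteSpace X] (hX : ¬ TopologicalSpace.SeparableSpace X) :
    HasNIP 𝕜 X ↔
      ∀ φ : ℕ → (X →L[𝕜] 𝕜),
        ¬ TopologicalSpace.IsSeparable ((⨅ i, LinearMap.ker (φ i : X →ₗ[𝕜] 𝕜) : Submodule 𝕜 X) : Set X) :=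
  hasNIP_iff_nonseparable_inter_general
end

section
/- The quotient Banach space ℓ∞/c₀ (the space of bounded scalar sequences modulo the closed subspace of sequences converging to zero) has the NIP. -/
/-!
The sets of codes of the finite prefixes of the branches `f : ℕ → Bool` of the binary tree form
an uncountable almost disjoint family of infinite subsets of `ℕ`. Since overlaps are finite, they
vanish in `ℓ∞ / c₀`, so the classes `v_f` of the indicators satisfy `‖∑ c_f v_f‖ ≤ 1` whenever all
`|c_f| ≤ 1`. Testing a functional `φ` on such a sum with `c_f` the phase of `φ v_f` gives
`∑ |φ v_f| ≤ ‖φ‖`, so `φ v_f ≠ 0` for only countably many `f`. Hence countably many functionals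
all vanish at some `v_f`, and `v_f ≠ 0` because its support is infinite.
-/

open Filter

/-- `c₀`, the subspace of `ℓ∞` consisting of the (bounded) sequences converging to zero. -/
noncomputable def czero : Submodule ℂ (lp (fun _ : ℕ => ℂ) ⊤) where
  carrier := {x | Tendsto (fun i => x i) atTop (nhds 0)}
  zero_mem' := by
    simpa [lp.coeFn_zero] using (tendsto_const_nhds :
      Tendsto (fun _ : ℕ => (0 : ℂ)) atTop (nhds 0))
  add_mem' := by
    intro a b ha hb
    have h := ha.add hb
    rw [add_zero] at h
    simpa [lp.coeFn_add] using h
  smul_mem' := by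
    intro c x hx
    have h := hx.const_smul c
    rw [smul_zero] at h
    simpa [lp.coeFn_smul] using h

open Set Function

section AlmostDisjoint

variable {α : Type*} [Encodable α]

def prefixCodes (f : ℕ → α) : Set ℕ :=
  range fun n => Encodable.encode (List.ofFn fun i : Fin n => f i)

theorem prefixCodes_infinite (f : ℕ → α) : (prefixCodes f).Infinite := by
  refine infinite_range_of_injective fun n m h => ?_
  simpa using congrArg List.length (Encodable.encode_injective h)

theorem prefixCodes_inter_finite {f g : ℕ → α} (hfg : f ≠ g) :
    (prefixCodes f ∩ prefixCodes g).Finite := by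
  obtain ⟨k, hk⟩ := Function.ne_iff.1 hfg
  refine ((finite_Iic k).image fun n => Encodable.encode (List.ofFn fun i : Fin n => f i)).subset
    ?_
  rintro _ ⟨⟨n, rfl⟩, ⟨m, hm⟩⟩
  refine ⟨n, mem_Iic.2 (not_lt.1 fun hkn => hk ?_), rfl⟩
  have hL := Encodable.encode_injective hm
  obtain rfl : m = n := by simpa using congrArg List.length hL
  simpa [hkn] using (congrArg (·[k]?) hL).symm

end AlmostDisjoint

section Functionals

variable {𝕜 E ι : Type*} [RCLike 𝕜] [SeminormedAddCommGroup E] [NormedSpace 𝕜 E] {v : ι → E}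

theorem sum_norm_apply_le_opNorm
    (hv : ∀ (s : Finset ι) (c : ι → 𝕜), (∀ r, ‖c r‖ ≤ 1) → ‖∑ r ∈ s, c r • v r‖ ≤ 1)
    (φ : E →L[𝕜] 𝕜) (s : Finset ι) : ∑ r ∈ s, ‖φ (v r)‖ ≤ ‖φ‖ := by
  choose c hc_norm hc using fun r => RCLike.exists_norm_eq_mul_self (φ (v r))
  have hφ : φ (∑ r ∈ s, c r • v r) = ((∑ r ∈ s, ‖φ (v r)‖ : ℝ) : 𝕜) := by
    simp [map_sum, hc]
  calc ∑ r ∈ s, ‖φ (v r)‖ = ‖φ (∑ r ∈ s, c r • v r)‖ := by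
        rw [hφ, RCLike.norm_ofReal, abs_of_nonneg (Finset.sum_nonneg fun r _ => norm_nonneg _)]
    _ ≤ ‖φ‖ * ‖∑ r ∈ s, c r • v r‖ := φ.le_opNorm _
    _ ≤ ‖φ‖ := mul_le_of_le_one_right (norm_nonneg _) (hv s c fun r => (hc_norm r).le)

theorem countable_support_apply
    (hv : ∀ (s : Finset ι) (c : ι → 𝕜), (∀ r, ‖c r‖ ≤ 1) → ‖∑ r ∈ s, c r • v r‖ ≤ 1)
    (φ : E →L[𝕜] 𝕜) : (support fun r => φ (v r)).Countable := by
  have hsum := summable_of_sum_le (fun r => norm_nonneg _) (sum_norm_apply_le_opNorm hv φ)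
  exact hsum.countable_support.mono fun r hr => norm_ne_zero_iff.2 hr

end Functionals

noncomputable def indicatorLp {α : Type*} (A : Set α) : lp (fun _ : α => ℂ) ⊤ :=
  ⟨A.indicator 1, memℓp_infty_iff.2 ⟨1, forall_mem_range.2 fun _ =>
    (norm_indicator_le_norm_self _ _).trans_eq norm_one⟩⟩

theorem indicatorLp_apply {α : Type*} (A : Set α) (i : α) :
    (indicatorLp A : α → ℂ) i = A.indicator 1 i := rfl

theorem norm_mkQ_le_of_eventually_norm_le (x : lp (fun _ : ℕ => ℂ) ⊤) {C : ℝ} (hC : 0 ≤ C)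
    (hx : ∀ᶠ i in atTop, ‖x i‖ ≤ C) : ‖czero.mkQ x‖ ≤ C := by
  classical
  let y : lp (fun _ : ℕ => ℂ) ⊤ := ⟨fun i => if ‖x i‖ ≤ C then x i else 0,
    memℓp_infty_iff.2 ⟨C, forall_mem_range.2 fun i => by split_ifs with h <;> simp [h, hC]⟩⟩
  have hy : ‖y‖ ≤ C := lp.norm_le_of_forall_le hC fun i => by
    change ‖ite _ _ _‖ ≤ C
    split_ifs with h <;> simp [h, hC]
  have hxy : x - y ∈ czero := by
    refine tendsto_const_nhds.congr' ?_
    filter_upwards [hx] with i hi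
    change (0 : ℂ) = x i - ite _ _ _
    rw [if_pos hi, sub_self]
  calc ‖czero.mkQ x‖ = ‖czero.mkQ y‖ := congrArg norm ((Submodule.Quotient.eq czero).2 hxy)
    _ ≤ C := (Submodule.Quotient.norm_mk_le czero y).trans hy

theorem mkQ_indicatorLp_ne_zero {A : Set ℕ} (hA : A.Infinite) :
    czero.mkQ (indicatorLp A) ≠ 0 := by
  intro h
  have hlim : Tendsto (A.indicator (1 : ℕ → ℂ)) atTop (nhds 0) :=
    (Submodule.Quotient.mk_eq_zero czero).1 h
  have hsmall : ∀ᶠ i in atTop, ‖A.indicator (1 : ℕ → ℂ) i‖ < 1 :=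
    hlim.norm.eventually (gt_mem_nhds (by simp))
  obtain ⟨i, hiA, hi⟩ := ((Nat.frequently_atTop_iff_infinite.2 hA).and_eventually hsmall).exists
  rw [indicator_of_mem hiA] at hi
  simp at hi

theorem norm_sum_mul_indicator_le_one {ι α : Type*} (s : Finset ι) (c : ι → ℂ)
    (hc : ∀ r, ‖c r‖ ≤ 1) (A : ι → Set α) (i : α)
    (hi : ∀ r ∈ s, ∀ r' ∈ s, i ∈ A r → i ∈ A r' → r = r') :
    ‖∑ r ∈ s, c r * (A r).indicator 1 i‖ ≤ 1 := by
  by_cases h : ∃ r ∈ s, i ∈ A r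
  · obtain ⟨r₀, hr₀s, hr₀⟩ := h
    rw [Finset.sum_eq_single_of_mem r₀ hr₀s fun r hr hne => by
      simp [indicator_of_notMem fun hir => hne (hi r hr r₀ hr₀s hir hr₀)]]
    simpa [hr₀] using hc r₀
  · push Not at h
    rw [Finset.sum_eq_zero fun r hr => by rw [indicator_of_notMem (h r hr), mul_zero]]
    simp

theorem norm_sum_smul_mkQ_indicatorLp_le_one {ι : Type*} {A : ι → Set ℕ}
    (hA : Pairwise fun r r' => (A r ∩ A r').Finite) (s : Finset ι) (c : ι → ℂ)
    (hc : ∀ r, ‖c r‖ ≤ 1) : ‖∑ r ∈ s, c r • czero.mkQ (indicatorLp (A r))‖ ≤ 1 := by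
  simp_rw [← map_smul, ← map_sum]
  have hoverlap : (⋃ p ∈ s.offDiag, A p.1 ∩ A p.2).Finite :=
    s.offDiag.finite_toSet.biUnion fun p hp => hA (Finset.mem_offDiag.1 hp).2.2
  refine norm_mkQ_le_of_eventually_norm_le _ zero_le_one ?_
  filter_upwards [Nat.cofinite_eq_atTop ▸ hoverlap.eventually_cofinite_notMem] with i hi
  simp only [lp.coeFn_sum, lp.coeFn_smul, Finset.sum_apply, Pi.smul_apply, indicatorLp_apply,
    smul_eq_mul]
  refine norm_sum_mul_indicator_le_one s c hc A i fun r hr r' hr' hir hir' => ?_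
  by_contra hne
  exact hi (mem_biUnion (x := (r, r')) (Finset.mem_offDiag.2 ⟨hr, hr', hne⟩) ⟨hir, hir'⟩)

/-- The quotient Banach space `ℓ∞ / c₀` has the nontrivial intersection property: for every
countable family `(φ_i)` of continuous linear functionals on `ℓ∞ / c₀` the intersection of
the kernels is nontrivial. -/
theorem linftyQuotCzero_hasNIP :
    ∀ φ : ℕ → ((lp (fun _ : ℕ => ℂ) ⊤ ⧸ czero) →L[ℂ] ℂ),
      (⨅ i, LinearMap.ker (φ i : (lp (fun _ : ℕ => ℂ) ⊤ ⧸ czero) →ₗ[ℂ] ℂ)) ≠ ⊥ := by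
  intro φ
  have : Uncountable (ℕ → Bool) :=
    Cardinal.aleph0_lt_mk_iff.1 (by simpa using Cardinal.cantor Cardinal.aleph0)
  let v : (ℕ → Bool) → lp (fun _ : ℕ => ℂ) ⊤ ⧸ czero := fun f =>
    czero.mkQ (indicatorLp (prefixCodes f))
  have hv := norm_sum_smul_mkQ_indicatorLp_le_one (A := prefixCodes (α := Bool))
    fun _ _ => prefixCodes_inter_finite
  have hcount : (⋃ i, support fun f => φ i (v f)).Countable :=
    countable_iUnion fun i => countable_support_apply (v := v) hv (φ i)
  obtain ⟨f, hf⟩ : ∃ f, f ∉ ⋃ i, support fun f => φ i (v f) :=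
    (ne_univ_iff_exists_notMem _).1 fun h => not_countable_univ (h ▸ hcount)
  refine (Submodule.ne_bot_iff _).2 ⟨v f, Submodule.mem_iInf _ |>.2 fun i => ?_,
    mkQ_indicatorLp_ne_zero (prefixCodes_infinite f)⟩
  by_contra h
  exact hf (mem_iUnion.2 ⟨i, h⟩)
end

section
/- Let X be a complex Banach space, P : X → ℂ a nonzero continuous 2-homogeneous polynomial, and M a separable P-maximal subspace of X. Then there exists a countable family (φ_i)_{i ∈ ℕ} of continuous linear functionals on X such that M = ⋂_{i ∈ ℕ} ker φ_i. -/
/-! The symmetric bilinear form `B` with `P x = B x x` is continuous by polarization, and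
`P`-maximality says that `M` is a maximal `B`-isotropic subspace, so every isotropic vector of
the orthogonal `Mᗮ` lies in `M`. If `Mᗮ ≠ M`, some `z ∈ Mᗮ \ M` has `B z z ≠ 0`; for `x ∈ Mᗮ`
with `B z x = 0`, a root `b` of `b² = -B x x / B z z` makes both `x ± b z` isotropic, hence in
`M`, and so `x ∈ M`. Thus `M = Mᗮ ⊓ ker (B z)`, and `Mᗮ` is cut out by the functionals `B d`
for `d` running through a dense sequence of `M`. -/

open LinearMap (BilinForm)

namespace LinearMap.BilinForm.IsSymm

variable {R M : Type*} [CommRing R] [AddCommGroup M] [Module R M] {B : BilinForm R M}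

theorem apply_add_smul_add_smul_self (hB : B.IsSymm) (x y : M) (c : R) :
    B (x + c • y) (x + c • y) = B x x + 2 * c * B x y + c ^ 2 * B y y := by
  simp only [map_add, map_smul, LinearMap.add_apply, LinearMap.smul_apply, smul_eq_mul,
    hB.eq y x]
  ring

end LinearMap.BilinForm.IsSymm

theorem LinearMap.BilinForm.IsSymm.exists_bound_of_norm_apply_self_le {𝕜 E : Type*} [RCLike 𝕜]
    [NormedAddCommGroup E] [NormedSpace 𝕜 E] {B : BilinForm 𝕜 E}
    (hB : B.IsSymm) {C : ℝ} (hC : ∀ x, ‖B x x‖ ≤ C * ‖x‖ ^ 2) :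
    ∃ C' : ℝ, ∀ x y, ‖B x y‖ ≤ C' * ‖x‖ * ‖y‖ := by
  have diag_le {v : E} (hv : ‖v‖ ≤ 2) : ‖B v v‖ ≤ |C| * 4 :=
    (hC v).trans <|
      mul_le_mul (le_abs_self C) (by nlinarith [norm_nonneg v]) (by positivity) (abs_nonneg C)
  have ball_bound {x y : E} (hx : ‖x‖ ≤ 1) (hy : ‖y‖ ≤ 1) : ‖B x y‖ ≤ 2 * |C| := by
    have polar : 4 * B x y = B (x + y) (x + y) - B (x - y) (x - y) := by
      have h₁ := hB.apply_add_smul_add_smul_self x y 1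
      have h₂ := hB.apply_add_smul_add_smul_self x y (-1)
      simp only [one_smul, neg_smul, ← sub_eq_add_neg] at h₁ h₂
      linear_combination h₂ - h₁
    have h₁ := diag_le (v := x + y) ((norm_add_le x y).trans (by linarith))
    have h₂ := diag_le (v := x - y) ((norm_sub_le x y).trans (by linarith))
    have := norm_sub_le (B (x + y) (x + y)) (B (x - y) (x - y))
    rw [← polar, norm_mul, RCLike.norm_ofNat] at this
    linarith
  refine ⟨2 * |C|, fun x y => ?_⟩
  have bound_left (x : E) {y : E} (hy : ‖y‖ ≤ 1) : ‖B x y‖ ≤ 2 * |C| * ‖x‖ := by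
    rw [hB.eq]
    simpa using (B y).bound_of_ball_bound' one_pos _
      (fun z hz => ball_bound hy (mem_closedBall_zero_iff.mp hz)) x
  simpa using (B x).bound_of_ball_bound' one_pos _
    (fun y hy => bound_left x (mem_closedBall_zero_iff.mp hy)) y

section HomogeneousPolynomial

variable {X : Type*} [NormedAddCommGroup X] [NormedSpace ℂ X]

theorem IsHomogPoly.exists_bilinForm {P : X → ℂ} (hP : IsHomogPoly 2 P) :
    ∃ B : BilinForm ℂ X, B.IsSymm ∧ ∀ x, P x = B x x := by
  obtain ⟨A, hA, hPA⟩ := hP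
  have update_zero (x y x' : X) : Function.update ![x, y] 0 x' = ![x', y] := by
    ext i; fin_cases i <;> rfl
  have update_one (x y y' : X) : Function.update ![x, y] 1 y' = ![x, y'] := by
    ext i; fin_cases i <;> rfl
  refine ⟨LinearMap.mk₂ ℂ (fun x y => A ![x, y])
    (fun x x' y => by simpa only [update_zero] using A.map_update_add ![x, y] 0 x x')
    (fun c x y => by simpa only [update_zero] using A.map_update_smul ![x, y] 0 c x)
    (fun x y y' => by simpa only [update_one] using A.map_update_add ![x, y] 1 y y')
    (fun c x y => by simpa only [update_one] using A.map_update_smul ![x, y] 1 c y),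
    ⟨fun x y => ?_⟩, fun x => ?_⟩
  · rw [LinearMap.mk₂_apply, LinearMap.mk₂_apply, ← hA (Equiv.swap 0 1)]
    congr 1; ext i; fin_cases i <;> rfl
  · rw [hPA, LinearMap.mk₂_apply]
    congr 1; ext i; fin_cases i <;> rfl

theorem IsContHomogPoly.exists_continuousBilin {P : X → ℂ} (hP : IsContHomogPoly 2 P) :
    ∃ B : X →L[ℂ] X →L[ℂ] ℂ, (∀ x y, B x y = B y x) ∧ ∀ x, P x = B x x := by
  obtain ⟨hPoly, C, hC⟩ := hP
  obtain ⟨B, hB, hPB⟩ := hPoly.exists_bilinForm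
  obtain ⟨C', hC'⟩ := hB.exists_bound_of_norm_apply_self_le (C := C) (by simpa [hPB] using hC)
  exact ⟨B.mkContinuous₂ C' hC', hB.eq, by simpa using hPB⟩

end HomogeneousPolynomial

namespace IsPMaximal

variable {X : Type*} [NormedAddCommGroup X] [NormedSpace ℂ X] {B : BilinForm ℂ X}
  {M : Submodule ℂ X}

theorem le_orthogonal (hB : B.IsSymm) (hM : IsPMaximal (fun x => B x x) M) :
    M ≤ B.orthogonal M := by
  intro y hy x hx
  have h := hB.apply_add_smul_add_smul_self x y 1
  simp only [one_smul, hM.2.1 _ (M.add_mem hx hy), hM.2.1 x hx, hM.2.1 y hy] at h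
  simpa using h

theorem mem_of_mem_orthogonal (hB : B.IsSymm) (hM : IsPMaximal (fun x => B x x) M) {u : X}
    (hu : u ∈ B.orthogonal M) (huu : B u u = 0) : u ∈ M := by
  have isotropic : ∀ x ∈ M ⊔ ℂ ∙ u, B x x = 0 := by
    intro x hx
    obtain ⟨m, hm, _, hc, rfl⟩ := Submodule.mem_sup.mp hx
    obtain ⟨c, rfl⟩ := Submodule.mem_span_singleton.mp hc
    have hmm : B m m = 0 := hM.2.1 m hm
    rw [hB.apply_add_smul_add_smul_self, hmm, hu m hm, huu]
    ring
  rw [← hM.2.2 _ le_sup_left isotropic]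
  exact Submodule.mem_sup_right (Submodule.mem_span_singleton_self u)

theorem eq_orthogonal_inf_ker (hB : B.IsSymm) (hM : IsPMaximal (fun x => B x x) M) {z : X}
    (hz : z ∈ B.orthogonal M) (hzz : B z z ≠ 0) :
    M = B.orthogonal M ⊓ LinearMap.ker (B z) := by
  refine le_antisymm
    (fun y hy => ⟨hM.le_orthogonal hB hy, show B z y = 0 by rw [hB.eq, hz y hy]⟩) ?_
  rintro x ⟨hx, hxz : B z x = 0⟩
  obtain ⟨b, hb⟩ := IsAlgClosed.exists_pow_nat_eq (-B x x / B z z) two_pos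
  rw [hB.eq] at hxz
  have mem (c : ℂ) (hc : c ^ 2 = b ^ 2) : x + c • z ∈ M := by
    refine hM.mem_of_mem_orthogonal hB (add_mem hx (Submodule.smul_mem _ c hz)) ?_
    rw [hB.apply_add_smul_add_smul_self, hxz, hc, hb]
    field_simp
    ring
  have hx2 : x = (2 : ℂ)⁻¹ • ((x + b • z) + (x + (-b) • z)) := by module
  rw [hx2]
  exact M.smul_mem _ (add_mem (mem b rfl) (mem (-b) (neg_sq b)))

theorem exists_eq_orthogonal_inf_ker (hB : B.IsSymm) (hM : IsPMaximal (fun x => B x x) M) :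
    ∃ z, M = B.orthogonal M ⊓ LinearMap.ker (B z) := by
  by_cases h : B.orthogonal M ≤ M
  · refine ⟨0, ?_⟩
    rw [map_zero, LinearMap.ker_zero, inf_top_eq]
    exact le_antisymm (hM.le_orthogonal hB) h
  · obtain ⟨z, hz, hzM⟩ := SetLike.not_le_iff_exists.mp h
    exact ⟨z, hM.eq_orthogonal_inf_ker hB hz fun hzz => hzM (hM.mem_of_mem_orthogonal hB hz hzz)⟩

end IsPMaximal

theorem ContinuousLinearMap.orthogonal_eq_iInf_ker_of_denseRange {𝕜 E ι : Type*}
    [NontriviallyNormedField 𝕜] [NormedAddCommGroup E] [NormedSpace 𝕜 E]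
    (B : E →L[𝕜] E →L[𝕜] 𝕜) {M : Submodule 𝕜 E} {d : ι → M} (hd : DenseRange d) :
    BilinForm.orthogonal B.toLinearMap₁₂ M = ⨅ i, LinearMap.ker (B (d i) : E →ₗ[𝕜] 𝕜) := by
  ext x
  simp only [BilinForm.mem_orthogonal_iff, Submodule.mem_iInf, LinearMap.mem_ker,
    ContinuousLinearMap.toLinearMap₁₂_apply_apply_apply, ContinuousLinearMap.coe_coe]
  refine ⟨fun h i => h _ (d i).2, fun h y hy => ?_⟩
  have : (fun m : M => B m x) = 0 := hd.equalizer (by fun_prop) continuous_const (funext h)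
  exact congrFun this ⟨y, hy⟩

theorem separable_pMaximal_eq_iInf_ker_general {X : Type*} [NormedAddCommGroup X] [NormedSpace ℂ X]
    (P : X → ℂ) (hP : IsContHomogPoly 2 P)
    (M : Submodule ℂ X) (hM : IsPMaximal P M)
    (hMsep : TopologicalSpace.IsSeparable (M : Set X)) :
    ∃ φ : ℕ → (X →L[ℂ] ℂ), M = ⨅ i, LinearMap.ker (φ i : X →ₗ[ℂ] ℂ) := by
  obtain ⟨B, hB, hPB⟩ := hP.exists_continuousBilin
  obtain rfl : P = fun x => B x x := funext hPB
  have : TopologicalSpace.SeparableSpace M := hMsep.separableSpace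
  obtain ⟨z, hz⟩ := hM.exists_eq_orthogonal_inf_ker (B := B.toLinearMap₁₂) ⟨hB⟩
  let d := TopologicalSpace.denseSeq M
  refine ⟨fun | 0 => B z | n + 1 => B (d n), hz.trans ?_⟩
  rw [← inf_iInf_nat_succ,
    B.orthogonal_eq_iInf_ker_of_denseRange (TopologicalSpace.denseRange_denseSeq M), inf_comm]
  rfl

/-- If `P` is a nonzero continuous 2-homogeneous polynomial on a complex Banach space `X`
and `M` is a separable `P`-maximal subspace, then `M` is the intersection of the kernels of
a countable family of continuous linear functionals. -/
theorem separable_pMaximal_eq_iInf_ker {X : Type*} [NormedAddCommGroup X] [NormedSpace ℂ X]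
    [CompleteSpace X] (P : X → ℂ) (hP : IsContHomogPoly 2 P) (hP0 : P ≠ 0)
    (M : Submodule ℂ X) (hM : IsPMaximal P M)
    (hMsep : TopologicalSpace.IsSeparable (M : Set X)) :
    ∃ φ : ℕ → (X →L[ℂ] ℂ), M = ⨅ i, LinearMap.ker (φ i : X →ₗ[ℂ] ℂ) :=
  separable_pMaximal_eq_iInf_ker_general P hP M hM hMsep
end
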